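/- arXiv:2412.04595 — 7 statements merged into one kernel-verified Lean document; each statement's English description precedes it below -/
import Mathlib

section
/- For every real number r > 0, one has (1/√π) ∫_{-∞}^{∞} exp(-e^t · r²) · e^{t/2} dt = 1/r. -/
open MeasureTheory Set

/-- Integral representation of the Coulomb kernel:
  `(1/√π) ∫_{-∞}^{∞} exp(-e^t · r²) · e^{t/2} dt = 1/r` for every `r > 0`. -/
theorem integral_repr_coulomb (r : ℝ) (hr : 0 < r) :
    (1 / Real.sqrt Real.pi) *
      ∫ t : ℝ, Real.exp (-(Real.exp t * r ^ 2)) * Real.exp (t / 2) = 1 / r := by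
  have key : ∫ x in Ioi (0:ℝ), x ^ ((1:ℝ)/2 - 1) * Real.exp (-(r ^ 2 * x))
      = (1 / r ^ 2) ^ ((1:ℝ)/2) * Real.Gamma (1/2) :=
    Real.integral_rpow_mul_exp_neg_mul_Ioi (by norm_num) (by positivity)
  have himg : Real.exp '' (univ : Set ℝ) = Ioi 0 := by
    rw [image_univ, Real.range_exp]
  have hcov : ∫ x in Ioi (0:ℝ), x ^ ((1:ℝ)/2 - 1) * Real.exp (-(r ^ 2 * x))
      = ∫ t : ℝ, Real.exp (-(Real.exp t * r ^ 2)) * Real.exp (t / 2) := by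
    rw [← himg, integral_image_eq_integral_abs_deriv_smul MeasurableSet.univ
      (fun x _ => (Real.hasDerivAt_exp x).hasDerivWithinAt)
      (Real.exp_injective.injOn) _]
    rw [MeasureTheory.setIntegral_univ]
    congr 1
    ext t
    rw [abs_of_pos (Real.exp_pos t), smul_eq_mul,
      Real.rpow_def_of_pos (Real.exp_pos t), Real.log_exp]
    rw [mul_comm (Real.exp t) (r ^ 2)]
    ring_nf
    rw [← Real.exp_add, show t + t * (-1 / 2) = t * (1 / 2) by ring]
    ring
  have hGamma : Real.Gamma (1/2) = Real.sqrt Real.pi := Real.Gamma_one_half_eq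
  have hpow : ((1:ℝ) / r ^ 2) ^ ((1:ℝ)/2) = 1 / r := by
    rw [← Real.sqrt_eq_rpow, one_div, Real.sqrt_inv, Real.sqrt_sq hr.le, one_div]
  rw [← hcov, key, hGamma, hpow]
  field_simp
end

section
/- Let q_1, …, q_N ∈ ℝ with Σ_{j=1}^N q_j = 0 (charge neutrality), and let a_1, …, a_N ∈ ℝ³ with |a_j| ≤ R for all j. Then for every v ∈ ℝ³ with |v| ≥ 2R and a_j + v ≠ 0 for all j, one has |Σ_{j=1}^N q_j / |a_j + v|| ≤ 2R (Σ_{j=1}^N |q_j|) / |v|². -/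
/-- Monopole-cancellation decay estimate: for a charge-neutral collection of charges
`q_j` located at `a_j ∈ ℝ³` with `|a_j| ≤ R`, and any shift `v` with `|v| ≥ 2R`
such that `a_j + v ≠ 0` for all `j`, one has
`|Σ_j q_j/|a_j + v|| ≤ 2R (Σ_j |q_j|)/|v|²`. -/
theorem monopole_cancellation (N : ℕ) (q : Fin N → ℝ) (hq : ∑ j, q j = 0)
    (a : Fin N → EuclideanSpace ℝ (Fin 3)) (R : ℝ) (hR : ∀ j, ‖a j‖ ≤ R)
    (v : EuclideanSpace ℝ (Fin 3)) (hv : 2 * R ≤ ‖v‖) (hnz : ∀ j, a j + v ≠ 0) :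
    |∑ j, q j / ‖a j + v‖| ≤ 2 * R * (∑ j, |q j|) / ‖v‖ ^ 2 := by
  rcases Nat.eq_zero_or_pos N with h0 | hN
  · subst h0; simp
  · have j0 : Fin N := ⟨0, hN⟩
    have hR0 : 0 ≤ R := le_trans (norm_nonneg _) (hR j0)
    have hv0 : 0 < ‖v‖ := by
      rcases (norm_nonneg v).lt_or_eq with h | h
      · exact h
      · exfalso
        have hvz : v = 0 := by rw [← norm_eq_zero, ← h]
        have hRle : R ≤ 0 := by nlinarith
        have ha : a j0 = 0 := norm_le_zero_iff.mp (le_trans (hR j0) hRle)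
        exact hnz j0 (by rw [ha, hvz, add_zero])
    have hRhalf : R ≤ ‖v‖ / 2 := by linarith
    -- per-term bound
    have key : ∀ j, |1 / ‖a j + v‖ - 1 / ‖v‖| ≤ 2 * R / ‖v‖ ^ 2 := by
      intro j
      set x := ‖a j + v‖ with hx
      have hxlb : ‖v‖ / 2 ≤ x := by
        have h1 : ‖v‖ - x ≤ ‖v - (a j + v)‖ := norm_sub_norm_le _ _
        have h2 : ‖v - (a j + v)‖ = ‖a j‖ := by
          rw [show v - (a j + v) = -(a j) by abel, norm_neg]
        have := hR j
        linarith
      have hxpos : 0 < x := by linarith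
      have hnum : |‖v‖ - x| ≤ R := by
        have h1 : |‖v‖ - x| ≤ ‖v - (a j + v)‖ := abs_norm_sub_norm_le _ _
        have h2 : ‖v - (a j + v)‖ = ‖a j‖ := by
          rw [show v - (a j + v) = -(a j) by abel, norm_neg]
        exact h1.trans (h2 ▸ hR j)
      have hrw : 1 / x - 1 / ‖v‖ = (‖v‖ - x) / (x * ‖v‖) := by
        field_simp
      rw [hrw, abs_div, abs_mul, abs_of_pos hxpos, abs_of_pos hv0]
      rw [div_le_div_iff₀ (by positivity) (by positivity)]
      nlinarith [abs_nonneg (‖v‖ - x), mul_le_mul hnum hxlb (by positivity) hR0]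
    have hsum : ∑ j, q j / ‖a j + v‖ = ∑ j, q j * (1 / ‖a j + v‖ - 1 / ‖v‖) := by
      rw [Finset.sum_congr rfl (fun j _ => (mul_sub (q j) _ _)), Finset.sum_sub_distrib]
      have : ∑ j, q j * (1 / ‖v‖) = (∑ j, q j) * (1 / ‖v‖) := by
        rw [Finset.sum_mul]
      rw [this, hq, zero_mul, sub_zero]
      exact Finset.sum_congr rfl (fun j _ => by rw [mul_one_div])
    rw [hsum]
    calc |∑ j, q j * (1 / ‖a j + v‖ - 1 / ‖v‖)|
        ≤ ∑ j, |q j * (1 / ‖a j + v‖ - 1 / ‖v‖)| := Finset.abs_sum_le_sum_abs _ _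
      _ ≤ ∑ j, |q j| * (2 * R / ‖v‖ ^ 2) := by
          refine Finset.sum_le_sum fun j _ => ?_
          rw [abs_mul]
          exact mul_le_mul_of_nonneg_left (key j) (abs_nonneg _)
      _ = 2 * R * (∑ j, |q j|) / ‖v‖ ^ 2 := by
          rw [← Finset.sum_mul]
          ring
end

section
/- Let L_x, L_y > 0, let q_1, …, q_N ∈ ℝ with Σ_{j=1}^N q_j = 0 (charge neutrality), and let r_1, …, r_N ∈ ℝ³ whose first two coordinates lie in (-L_x/2, L_x/2) × (-L_y/2, L_y/2). Fix i ∈ {1, …, N} and for n = (n₁, n₂) ∈ ℤ² \ {0} define F(n) = Σ_{j=1}^N q_j / |r_i - r_j + (n₁ L_x, n₂ L_y, 0)|. Then the family n ↦ |F(n) + F(-n)|, indexed by n ∈ ℤ² \ {0}, is summable. -/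
/-!
Since `∑ⱼ qⱼ = 0`, one may subtract `2 (∑ⱼ qⱼ) / ‖v‖`, `v = (n₁ L_x, n₂ L_y, 0)`, from
`F(n) + F(-n)`; this turns each term into the second difference
`1/‖d + v‖ + 1/‖d - v‖ - 2/‖v‖` of `x ↦ 1/‖x‖` around `v`, `d = rᵢ - rⱼ`. The parallelogram
law and the triangle inequality bound it by `8 ‖d‖² / ‖v‖³`, so the family is eventually
dominated by a multiple of `‖n‖⁻³`, which is summable over `ℤ²`.
-/

/-- The lattice translation vector `(n₁ L_x, n₂ L_y, 0) ∈ ℝ³`. -/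
noncomputable def latticeVec (Lx Ly : ℝ) (n : ℤ × ℤ) : EuclideanSpace ℝ (Fin 3) :=
  (WithLp.equiv 2 (Fin 3 → ℝ)).symm ![(n.1 : ℝ) * Lx, (n.2 : ℝ) * Ly, 0]

open Filter Finset

theorem abs_one_div_add_one_div_sub_two_div_le {a b c D : ℝ} (hc : 0 < c) (ha : c / 2 ≤ a)
    (hb : c / 2 ≤ b) (hab : a ^ 2 + b ^ 2 = 2 * (D + c ^ 2)) (hsum : 2 * c ≤ a + b) :
    |1 / a + 1 / b - 2 / c| ≤ 8 * D / c ^ 3 := by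
  have ha0 : 0 < a := by linarith
  have hb0 : 0 < b := by linarith
  have hnum : |c * (a + b) - 2 * (a * b)| ≤ 2 * D := by
    have hupper : c * (a + b) - 2 * (a * b) = 2 * D - (a + b - 2 * c) * (a + b + c) := by
      linear_combination hab
    have hlower : c * (a + b) - 2 * (a * b) = -2 * D + c * (a + b - 2 * c) + (a - b) ^ 2 := by
      linear_combination -hab
    rw [abs_le]
    constructor
    · nlinarith [sq_nonneg (a - b)]
    · nlinarith
  have hden : c ^ 3 / 4 ≤ a * b * c := by
    calc c ^ 3 / 4 = c / 2 * (c / 2) * c := by ring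
      _ ≤ a * b * c := by gcongr
  calc |1 / a + 1 / b - 2 / c| = |c * (a + b) - 2 * (a * b)| / (a * b * c) := by
        rw [← abs_of_pos (by positivity : 0 < a * b * c), ← abs_div]
        congr 1
        field_simp
        ring
    _ ≤ 2 * D / (c ^ 3 / 4) := by gcongr; exact (abs_nonneg _).trans hnum
    _ = 8 * D / c ^ 3 := by ring

theorem abs_one_div_norm_add_add_one_div_norm_sub_sub_le {E : Type*} [NormedAddCommGroup E]
    [InnerProductSpace ℝ E] {d v : E} (hv : 0 < ‖v‖) (hd : 2 * ‖d‖ ≤ ‖v‖) :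
    |1 / ‖d + v‖ + 1 / ‖d - v‖ - 2 / ‖v‖| ≤ 8 * ‖d‖ ^ 2 / ‖v‖ ^ 3 := by
  have hplus : ‖v‖ ≤ ‖d + v‖ + ‖d‖ := by simpa using norm_sub_le (d + v) d
  have hminus : ‖v‖ ≤ ‖d‖ + ‖d - v‖ := by simpa using norm_sub_le d (d - v)
  have hsum : 2 * ‖v‖ ≤ ‖d + v‖ + ‖d - v‖ := by
    simpa [← two_smul ℝ v, norm_smul] using norm_sub_le (d + v) (d - v)
  refine abs_one_div_add_one_div_sub_two_div_le hv (by linarith) (by linarith) ?_ hsum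
  rw [parallelogram_law_with_norm ℝ]

theorem sum_mul_sub_const_of_sum_eq_zero {ι : Type*} {s : Finset ι} {q : ι → ℝ}
    (hq : ∑ j ∈ s, q j = 0) (f : ι → ℝ) (c : ℝ) :
    ∑ j ∈ s, q j * (f j - c) = ∑ j ∈ s, q j * f j := by
  simp only [mul_sub, sum_sub_distrib, ← sum_mul, hq, zero_mul, sub_zero]

theorem abs_sum_div_norm_add_add_sum_div_norm_sub_le {ι E : Type*} [Fintype ι]
    [NormedAddCommGroup E] [InnerProductSpace ℝ E] {q : ι → ℝ} (hq : ∑ j, q j = 0)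
    {d : ι → E} {R : ℝ} (hR : ∀ j, ‖d j‖ ≤ R) {v : E} (hv : 0 < ‖v‖) (hRv : 2 * R ≤ ‖v‖) :
    |∑ j, q j / ‖d j + v‖ + ∑ j, q j / ‖d j - v‖| ≤ (∑ j, |q j|) * (8 * R ^ 2) / ‖v‖ ^ 3 := by
  calc |∑ j, q j / ‖d j + v‖ + ∑ j, q j / ‖d j - v‖|
      = |∑ j, q j * (1 / ‖d j + v‖ + 1 / ‖d j - v‖ - 2 / ‖v‖)| := by
        rw [sum_mul_sub_const_of_sum_eq_zero hq, ← sum_add_distrib]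
        simp only [mul_add, mul_one_div]
    _ ≤ ∑ j, |q j| * (8 * R ^ 2 / ‖v‖ ^ 3) := by
        refine (abs_sum_le_sum_abs _ _).trans (sum_le_sum fun j _ => ?_)
        rw [abs_mul]
        gcongr
        refine (abs_one_div_norm_add_add_one_div_norm_sub_sub_le hv
          ((mul_le_mul_of_nonneg_left (hR j) zero_le_two).trans hRv)).trans ?_
        gcongr
        exact hR j
    _ = (∑ j, |q j|) * (8 * R ^ 2) / ‖v‖ ^ 3 := by rw [← sum_mul]; ring

@[simp]
theorem latticeVec_apply_zero (Lx Ly : ℝ) (n : ℤ × ℤ) : latticeVec Lx Ly n 0 = n.1 * Lx := rfl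

@[simp]
theorem latticeVec_apply_one (Lx Ly : ℝ) (n : ℤ × ℤ) : latticeVec Lx Ly n 1 = n.2 * Ly := rfl

@[simp]
theorem latticeVec_apply_two (Lx Ly : ℝ) (n : ℤ × ℤ) : latticeVec Lx Ly n 2 = 0 := rfl

theorem latticeVec_neg (Lx Ly : ℝ) (n : ℤ × ℤ) :
    latticeVec Lx Ly (-n) = -latticeVec Lx Ly n := by
  ext k
  fin_cases k <;> simp [neg_mul]

theorem min_mul_norm_le_norm_latticeVec {Lx Ly : ℝ} (hLx : 0 ≤ Lx) (hLy : 0 ≤ Ly) (n : ℤ × ℤ) :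
    min Lx Ly * ‖n‖ ≤ ‖latticeVec Lx Ly n‖ := by
  rw [Prod.norm_def, mul_max_of_nonneg _ _ (le_min hLx hLy)]
  refine max_le ?_ ?_
  · calc min Lx Ly * ‖n.1‖ ≤ ‖latticeVec Lx Ly n 0‖ := by
          rw [latticeVec_apply_zero, norm_mul, Real.norm_of_nonneg hLx, mul_comm,
            Int.norm_cast_real]
          gcongr
          exact min_le_left _ _
      _ ≤ ‖latticeVec Lx Ly n‖ := PiLp.norm_apply_le _ _
  · calc min Lx Ly * ‖n.2‖ ≤ ‖latticeVec Lx Ly n 1‖ := by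
          rw [latticeVec_apply_one, norm_mul, Real.norm_of_nonneg hLy, mul_comm,
            Int.norm_cast_real]
          gcongr
          exact min_le_right _ _
      _ ≤ ‖latticeVec Lx Ly n‖ := PiLp.norm_apply_le _ _

theorem summable_norm_rpow_neg_intProd {k : ℝ} (hk : 2 < k) :
    Summable fun n : ℤ × ℤ => ‖n‖ ^ (-k) := by
  rw [← (finTwoArrowEquiv ℤ).summable_iff]
  refine (EisensteinSeries.summable_one_div_norm_rpow hk).congr fun x => ?_
  simp [Prod.norm_def, EisensteinSeries.norm_eq_max_natAbs, Int.norm_eq_abs]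

theorem tendsto_norm_cofinite_atTop {E : Type*} [NormedAddCommGroup E] [ProperSpace E]
    [DiscreteTopology E] : Tendsto (fun x : E => ‖x‖) cofinite atTop :=
  cocompact_eq_cofinite E ▸ tendsto_norm_cocompact_atTop

theorem quasi2d_lattice_sum_summable_general (Lx Ly : ℝ) (hLx : 0 < Lx) (hLy : 0 < Ly)
    (N : ℕ) (q : Fin N → ℝ) (hq : ∑ j, q j = 0)
    (r : Fin N → EuclideanSpace ℝ (Fin 3))
    (i : Fin N) :
    Summable (fun n : {n : ℤ × ℤ // n ≠ 0} =>
      |(∑ j, q j / ‖r i - r j + latticeVec Lx Ly n.1‖) +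
        (∑ j, q j / ‖r i - r j + latticeVec Lx Ly (-n.1)‖)|) := by
  obtain ⟨R, hR⟩ : ∃ R, ∀ j, ‖r i - r j‖ ≤ R := Finite.exists_le _
  have hR0 : 0 ≤ R := (norm_nonneg _).trans (hR i)
  set m := min Lx Ly
  have hm : 0 < m := lt_min hLx hLy
  set C := (∑ j, |q j|) * (8 * R ^ 2)
  suffices Summable fun n : ℤ × ℤ => |(∑ j, q j / ‖r i - r j + latticeVec Lx Ly n‖) +
      (∑ j, q j / ‖r i - r j + latticeVec Lx Ly (-n)‖)| from
    this.comp_injective Subtype.val_injective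
  refine ((summable_norm_rpow_neg_intProd (k := 3) (by norm_num)).mul_left (C / m ^ 3)
    ).of_norm_bounded_eventually ?_
  filter_upwards [tendsto_norm_cofinite_atTop.eventually_ge_atTop ((2 * R + 1) / m)]
    with n hn
  have hmn : 2 * R + 1 ≤ m * ‖n‖ := by rwa [div_le_iff₀' hm] at hn
  have hmn0 : 0 < m * ‖n‖ := by linarith
  have hv : m * ‖n‖ ≤ ‖latticeVec Lx Ly n‖ := min_mul_norm_le_norm_latticeVec hLx.le hLy.le n
  simp only [Real.norm_eq_abs, abs_abs, latticeVec_neg, ← sub_eq_add_neg]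
  calc _ ≤ C / ‖latticeVec Lx Ly n‖ ^ 3 :=
        abs_sum_div_norm_add_add_sum_div_norm_sub_le hq hR (by linarith) (by linarith)
    _ ≤ C / (m * ‖n‖) ^ 3 := by gcongr
    _ = C / m ^ 3 * ‖n‖ ^ (-3 : ℝ) := by
        rw [Real.rpow_neg (norm_nonneg n), mul_pow, div_mul_eq_div_div, div_eq_mul_inv (C / m ^ 3)]
        norm_cast

/-- Convergence of the doubly periodic (quasi-2D) Coulomb lattice sum under charge
neutrality, in symmetrized form: the family
`n ↦ |F(n) + F(-n)|`, `n ∈ ℤ² \ {0}`, with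
`F(n) = Σ_j q_j/|r_i - r_j + (n₁L_x, n₂L_y, 0)|`, is summable. -/
theorem quasi2d_lattice_sum_summable (Lx Ly : ℝ) (hLx : 0 < Lx) (hLy : 0 < Ly)
    (N : ℕ) (q : Fin N → ℝ) (hq : ∑ j, q j = 0)
    (r : Fin N → EuclideanSpace ℝ (Fin 3))
    (hx : ∀ j, r j 0 ∈ Set.Ioo (-(Lx / 2)) (Lx / 2))
    (hy : ∀ j, r j 1 ∈ Set.Ioo (-(Ly / 2)) (Ly / 2))
    (i : Fin N) :
    Summable (fun n : {n : ℤ × ℤ // n ≠ 0} =>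
      |(∑ j, q j / ‖r i - r j + latticeVec Lx Ly n.1‖) +
        (∑ j, q j / ‖r i - r j + latticeVec Lx Ly (-n.1)‖)|) :=
  quasi2d_lattice_sum_summable_general Lx Ly hLx hLy N q hq r i
end

section
/- For every s > 0 and every natural number P, the P-th derivative of the Gaussian f(x) = exp(-x²/s²) satisfies sup_{x ∈ ℝ} |f^{(P)}(x)| ≤ √(2^P · P!) / s^P. -/
/-!
Write `exp (-x²) = √π · 𝓕 g` with `g ξ = exp (-π² ξ²)`. Differentiating under the Fourier integral
bounds the `n`-th derivative by `√π ∫ |2πξ|ⁿ g ξ dξ = 2ⁿ Γ((n+1)/2) / √π`, and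
`2ⁿ Γ((n+1)/2)² ≤ π n!` follows by induction from `n` to `n + 2`, where the two sides gain the
factors `(n+1)²` and `(n+1)(n+2)`. The width `s` enters only through the chain rule.
-/

open Real MeasureTheory FourierTransform
open scoped Complex Nat

lemma norm_iteratedDeriv_ofReal_comp {f : ℝ → ℝ} {n : ℕ} {x : ℝ} (hf : ContDiffAt ℝ n f x) :
    ‖iteratedDeriv n (fun y ↦ (f y : ℂ)) x‖ = |iteratedDeriv n f x| := by
  rw [← Real.norm_eq_abs, ← norm_iteratedFDeriv_eq_norm_iteratedDeriv,
    ← norm_iteratedFDeriv_eq_norm_iteratedDeriv]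
  exact Complex.ofRealLI.norm_iteratedFDeriv_comp_left hf le_rfl

theorem Real.norm_iteratedDeriv_fourier_le {E : Type*} [NormedAddCommGroup E] [NormedSpace ℂ E]
    {f : ℝ → E} {n : ℕ} (hf : ∀ k ≤ n, Integrable (fun x : ℝ ↦ x ^ k • f x)) (w : ℝ) :
    ‖iteratedDeriv n (𝓕 f) w‖ ≤ (2 * π) ^ n * ∫ x, |x| ^ n * ‖f x‖ := by
  rw [Real.iteratedDeriv_fourier (N := n) (fun k hk ↦ hf k (mod_cast hk)) le_rfl,
    ← integral_const_mul]
  refine (VectorFourier.norm_fourierIntegral_le_integral_norm _ _ _ _ _).trans_eq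
    (integral_congr_ae ?_)
  filter_upwards with x
  simp [norm_smul, mul_pow, abs_of_pos pi_pos, mul_assoc]

theorem integral_abs_pow_mul_exp_neg_mul_sq {b : ℝ} (hb : 0 < b) (n : ℕ) :
    ∫ x, |x| ^ n * rexp (-b * x ^ 2) = b ^ (-(n + 1) / 2 : ℝ) * Gamma ((n + 1) / 2) := by
  have h := integral_rpow_mul_exp_neg_mul_rpow two_pos (by linarith [n.cast_nonneg (α := ℝ)]) hb
    (q := n)
  simp only [Real.rpow_two, Real.rpow_natCast] at h
  calc ∫ x, |x| ^ n * rexp (-b * x ^ 2) = ∫ x, |x| ^ n * rexp (-b * |x| ^ 2) := by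
        simp only [sq_abs]
    _ = _ := by rw [integral_comp_abs (f := fun x ↦ x ^ n * rexp (-b * x ^ 2)), h]; ring

theorem Real.two_pow_mul_Gamma_add_one_div_two_sq_le (n : ℕ) :
    2 ^ n * Gamma ((n + 1) / 2) ^ 2 ≤ π * n ! := by
  induction n using Nat.twoStepInduction with
  | zero => norm_num [Gamma_one_half_eq, sq_sqrt pi_pos.le]
  | one => norm_num [Gamma_one]; linarith [pi_gt_three]
  | more n ih _ =>
    have hn : (0 : ℝ) < (n + 1) / 2 := by positivity
    rw [show ((n + 2 : ℕ) + 1) / 2 = (n + 1) / 2 + (1 : ℝ) by push_cast; ring,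
      Gamma_add_one hn.ne', Nat.factorial_succ, Nat.factorial_succ]
    push_cast
    calc 2 ^ (n + 2) * ((n + 1) / 2 * Gamma ((n + 1) / 2)) ^ 2
        = (n + 1) ^ 2 * (2 ^ n * Gamma ((n + 1) / 2) ^ 2) := by ring
      _ ≤ (n + 1) * (n + 2) * (π * n !) := by
        gcongr ?_ * ?_
        · nlinarith
      _ = π * ((n + 1 + 1) * ((n + 1) * n !)) := by ring

lemma integrable_pow_smul_cexp_neg_pi_mul_sq {b : ℂ} (hb : 0 < b.re) (k : ℕ) :
    Integrable (fun x : ℝ ↦ x ^ k • cexp (-π * b * x ^ 2)) := by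
  have hπb : 0 < π * b.re := by positivity
  have hk : (-1 : ℝ) < k := by linarith [k.cast_nonneg (α := ℝ)]
  refine (integrable_rpow_mul_exp_neg_mul_sq hπb hk).mono (by fun_prop) (Filter.Eventually.of_forall fun x ↦ le_of_eq ?_)
  rw [norm_smul, neg_mul, norm_cexp_neg_mul_sq, Real.rpow_natCast, norm_mul, Complex.re_ofReal_mul,
    Real.norm_of_nonneg (exp_pos _).le, neg_mul]

lemma ofReal_exp_neg_sq_eq_sqrt_pi_mul_fourier :
    (fun x : ℝ ↦ (rexp (-x ^ 2) : ℂ)) =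
      fun x ↦ (√π : ℂ) * 𝓕 (fun ξ : ℝ ↦ cexp (-π * π * ξ ^ 2)) x := by
  rw [fourier_gaussian_pi (by simpa using pi_pos)]
  ext x
  have hcpow : (π : ℂ) ^ (1 / 2 : ℂ) = √π := by
    rw [Real.sqrt_eq_rpow, Complex.ofReal_cpow pi_pos.le]; norm_num
  rw [hcpow, ← mul_assoc, mul_one_div_cancel (Complex.ofReal_ne_zero.2 (sqrt_pos.2 pi_pos).ne'),
    one_mul, neg_div, div_self (Complex.ofReal_ne_zero.2 pi_ne_zero)]
  push_cast
  ring_nf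

lemma two_pow_mul_Gamma_add_one_div_two_div_sqrt_pi_le (n : ℕ) :
    2 ^ n * Gamma ((n + 1) / 2) / √π ≤ √(2 ^ n * n !) := by
  rw [Real.le_sqrt (by positivity) (by positivity), div_pow, sq_sqrt pi_pos.le, div_le_iff₀ pi_pos]
  calc (2 ^ n * Gamma ((n + 1) / 2)) ^ 2 = 2 ^ n * (2 ^ n * Gamma ((n + 1) / 2) ^ 2) := by ring
    _ ≤ 2 ^ n * (π * n !) := by
      gcongr 2 ^ n * ?_
      exact Real.two_pow_mul_Gamma_add_one_div_two_sq_le n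
    _ = 2 ^ n * n ! * π := by ring

theorem abs_iteratedDeriv_exp_neg_sq_le (n : ℕ) (x : ℝ) :
    |iteratedDeriv n (fun x : ℝ ↦ rexp (-x ^ 2)) x| ≤ √(2 ^ n * n !) := by
  set g : ℝ → ℂ := fun ξ ↦ cexp (-π * π * ξ ^ 2)
  have hπ : 0 < (π : ℂ).re := by simpa using pi_pos
  have hderiv : |iteratedDeriv n (fun x ↦ rexp (-x ^ 2)) x| = √π * ‖iteratedDeriv n (𝓕 g) x‖ := by
    rw [← norm_iteratedDeriv_ofReal_comp (by fun_prop), ofReal_exp_neg_sq_eq_sqrt_pi_mul_fourier,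
      iteratedDeriv_const_mul_field, norm_mul, Complex.norm_real,
      Real.norm_of_nonneg (sqrt_nonneg _)]
  have hmoment : ∫ ξ, |ξ| ^ n * ‖g ξ‖ = (π ^ (n + 1))⁻¹ * Gamma ((n + 1) / 2) := by
    have hpow : (π * π) ^ (-(n + 1) / 2 : ℝ) = (π ^ (n + 1))⁻¹ := by
      rw [← sq, ← Real.rpow_natCast π 2, ← Real.rpow_mul pi_pos.le,
        show ((2 : ℕ) : ℝ) * (-(n + 1) / 2) = -((n + 1 : ℕ) : ℝ) by push_cast; ring,
        Real.rpow_neg pi_pos.le, Real.rpow_natCast]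
    rw [← hpow, ← integral_abs_pow_mul_exp_neg_mul_sq (by positivity)]
    congr with ξ
    rw [show g ξ = cexp ((-(π * π) * ξ ^ 2 : ℝ)) by simp only [g]; push_cast; ring_nf,
      Complex.norm_exp_ofReal]
  calc |iteratedDeriv n (fun x ↦ rexp (-x ^ 2)) x| = √π * ‖iteratedDeriv n (𝓕 g) x‖ := hderiv
    _ ≤ √π * ((2 * π) ^ n * ((π ^ (n + 1))⁻¹ * Gamma ((n + 1) / 2))) := by
      rw [← hmoment]
      gcongr
      exact Real.norm_iteratedDeriv_fourier_le
        (fun k _ ↦ integrable_pow_smul_cexp_neg_pi_mul_sq hπ k) x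
    _ = 2 ^ n * Gamma ((n + 1) / 2) / √π := by
      have hsqrt : √π ^ 2 = π := sq_sqrt pi_pos.le
      have hsqrt_ne : √π ≠ 0 := (sqrt_pos.2 pi_pos).ne'
      field_simp
      rw [hsqrt]
      ring
    _ ≤ √(2 ^ n * n !) := two_pow_mul_Gamma_add_one_div_two_div_sqrt_pi_le n

/-- Derivative bound for the Gaussian: for `s > 0` and every `P ∈ ℕ`,
`sup_x |(d/dx)^P exp(-x²/s²)| ≤ √(2^P P!)/s^P`. -/
theorem gaussian_iteratedDeriv_bound (s : ℝ) (hs : 0 < s) (P : ℕ) :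
    ∀ x : ℝ, |iteratedDeriv P (fun x : ℝ => Real.exp (-(x ^ 2 / s ^ 2))) x| ≤
      Real.sqrt (2 ^ P * Nat.factorial P) / s ^ P := by
  intro x
  have hscale : (fun x : ℝ => rexp (-(x ^ 2 / s ^ 2))) = fun x ↦ rexp (-(s⁻¹ * x) ^ 2) := by
    ext x; ring_nf
  rw [hscale, iteratedDeriv_comp_const_mul (f := fun y ↦ rexp (-y ^ 2)) (by fun_prop), abs_mul,
    abs_pow, abs_inv, abs_of_pos hs, div_eq_inv_mul, ← inv_pow]
  gcongr
  exact abs_iteratedDeriv_exp_neg_sq_le P _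
end

section
/- For every s > 0 and every k ∈ ℝ³, ∫_{ℝ³} (6/s² - 4|x|²/s⁴) · exp(-|x|²/s²) · exp(-i ⟨k, x⟩) dx = π^{3/2} s³ |k|² exp(-s² |k|²/4), where ⟨·,·⟩ is the Euclidean inner product and the integral is of a complex-valued function over ℝ³. -/
/-!
Put `b = s⁻²` and `G_b(x) = exp(-b‖x‖² - i⟨k, x⟩)`, so that the integrand is
`2n b G_b - 4b² ‖x‖² G_b` in dimension `n`. The Gaussian Fourier transform gives
`∫ G_b = (π/b)^{n/2} exp(-‖k‖²/(4b))`, and the second moment `∫ ‖x‖² G_b` is minus the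
`b`-derivative of this, by differentiation under the integral sign. In the combination the
terms coming from the derivative of `(π/b)^{n/2}` cancel, leaving the factor `‖k‖²`.
-/

open MeasureTheory Complex Module
open scoped Real RealInnerProductSpace

noncomputable section

theorem mul_exp_neg_mul_le {c : ℝ} (hc : 0 < c) (r : ℝ) :
    r * rexp (-c * r) ≤ 2 / c * rexp (-(c / 2) * r) := by
  have hsplit : rexp (-c * r) = rexp (-(c / 2) * r) * rexp (-(c / 2) * r) := by
    rw [← Real.exp_add]; ring_nf
  rw [hsplit, ← mul_assoc]
  gcongr
  rw [mul_comm, neg_mul, Real.exp_neg, inv_mul_le_iff₀ (Real.exp_pos _)]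
  calc r = 2 / c * (c / 2 * r) := by field_simp
    _ ≤ 2 / c * rexp (c / 2 * r) := by
        gcongr
        exact (le_add_of_nonneg_right zero_le_one).trans (Real.add_one_le_exp _)
    _ = _ := mul_comm _ _

variable {V : Type*} [NormedAddCommGroup V] [InnerProductSpace ℝ V]

def modulatedGaussian (k : V) (b : ℝ) (v : V) : ℂ :=
  cexp (-(b : ℂ) * (‖v‖ : ℂ) ^ 2 + -I * (⟪k, v⟫ : ℂ))

theorem continuous_modulatedGaussian (k : V) (b : ℝ) : Continuous (modulatedGaussian k b) := by
  unfold modulatedGaussian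
  fun_prop

theorem norm_modulatedGaussian (k : V) (b : ℝ) (v : V) :
    ‖modulatedGaussian k b v‖ = rexp (-b * ‖v‖ ^ 2) := by
  rw [modulatedGaussian, Complex.norm_exp]
  simp [← ofReal_pow]

theorem hasDerivAt_modulatedGaussian (k v : V) (b : ℝ) :
    HasDerivAt (fun b => modulatedGaussian k b v) (-(‖v‖ : ℂ) ^ 2 * modulatedGaussian k b v) b := by
  have h := (((hasDerivAt_id b).ofReal_comp.neg.mul_const ((‖v‖ : ℂ) ^ 2)).add_const
    (-I * (⟪k, v⟫ : ℂ))).cexp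
  simpa [modulatedGaussian, mul_comm] using h

variable [FiniteDimensional ℝ V] [MeasurableSpace V] [BorelSpace V]

theorem integrable_modulatedGaussian (k : V) {b : ℝ} (hb : 0 < b) :
    Integrable (modulatedGaussian k b) :=
  GaussianFourier.integrable_cexp_neg_mul_sq_norm_add (by simpa using hb) (-I) k

theorem integral_modulatedGaussian (k : V) {b : ℝ} (hb : 0 < b) :
    ∫ v, modulatedGaussian k b v =
      (((π / b) ^ (finrank ℝ V / 2 : ℝ) * rexp (-(‖k‖ ^ 2 / (4 * b))) : ℝ) : ℂ) := by
  simp only [modulatedGaussian]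
  rw [GaussianFourier.integral_cexp_neg_mul_sq_norm_add (by simpa using hb) (-I) k]
  push_cast
  rw [Complex.ofReal_cpow (by positivity)]
  congr 2
  · norm_cast
  · push_cast; rfl
  · rw [neg_sq, I_sq]; ring

theorem integrable_sq_norm_mul_modulatedGaussian (k : V) {b : ℝ} (hb : 0 < b) :
    Integrable (fun v => (‖v‖ : ℂ) ^ 2 * modulatedGaussian k b v) := by
  have hbound : Integrable (fun v : V => 2 / b * rexp (-(b / 2) * ‖v‖ ^ 2)) := by
    simpa [norm_modulatedGaussian] using
      ((integrable_modulatedGaussian (0 : V) (half_pos hb)).norm.const_mul (2 / b))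
  refine hbound.mono' ((continuous_ofReal.comp continuous_norm).pow 2
    |>.mul (continuous_modulatedGaussian k b)).aestronglyMeasurable
    (Filter.Eventually.of_forall fun v => ?_)
  rw [norm_mul, norm_modulatedGaussian, norm_pow, norm_real, norm_norm]
  exact mul_exp_neg_mul_le hb _

theorem hasDerivAt_integral_modulatedGaussian (k : V) {b : ℝ} (hb : 0 < b) :
    HasDerivAt (fun b => ∫ v, modulatedGaussian k b v)
      (-∫ v, (‖v‖ : ℂ) ^ 2 * modulatedGaussian k b v) b := by
  have hbound : Integrable (fun v : V => 4 / b * rexp (-(b / 4) * ‖v‖ ^ 2)) := by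
    simpa [norm_modulatedGaussian] using
      ((integrable_modulatedGaussian (0 : V) (by positivity : 0 < b / 4)).norm.const_mul (4 / b))
  rw [← integral_neg]
  refine (hasDerivAt_integral_of_dominated_loc_of_deriv_le
    (F' := fun b v => -((‖v‖ : ℂ) ^ 2 * modulatedGaussian k b v))
    (Metric.ball_mem_nhds b (half_pos hb))
    (Filter.Eventually.of_forall fun b => (continuous_modulatedGaussian k b).aestronglyMeasurable)
    (integrable_modulatedGaussian k hb)
    (integrable_sq_norm_mul_modulatedGaussian k hb).neg.aestronglyMeasurable ?_ hbound
    (Filter.Eventually.of_forall fun v x _ => ?_)).2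
  · refine Filter.Eventually.of_forall fun v x hx => ?_
    have hx : b / 2 < x := by
      have := (abs_lt.1 (Real.dist_eq x b ▸ Metric.mem_ball.1 hx)).1
      linarith
    rw [norm_neg, norm_mul, norm_modulatedGaussian, norm_pow, norm_real, norm_norm]
    calc ‖v‖ ^ 2 * rexp (-x * ‖v‖ ^ 2) ≤ ‖v‖ ^ 2 * rexp (-(b / 2) * ‖v‖ ^ 2) := by gcongr
      _ ≤ 2 / (b / 2) * rexp (-(b / 2 / 2) * ‖v‖ ^ 2) := mul_exp_neg_mul_le (half_pos hb) _
      _ = 4 / b * rexp (-(b / 4) * ‖v‖ ^ 2) := by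
        rw [show 2 / (b / 2) = 4 / b by ring, show b / 2 / 2 = b / 4 by ring]
  · simpa only [neg_mul] using hasDerivAt_modulatedGaussian k v x

theorem hasDerivAt_pi_div_rpow_mul_exp_neg_div (n a : ℝ) {b : ℝ} (hb : 0 < b) :
    HasDerivAt (fun b => (π / b) ^ (n / 2) * rexp (-(a / (4 * b))))
      (-((π / b) ^ (n / 2) * (n / (2 * b) - a / (4 * b ^ 2)) * rexp (-(a / (4 * b))))) b := by
  have hquot : HasDerivAt (fun b => π / b) (-(π / b ^ 2)) b := by
    simpa [div_eq_mul_inv] using (hasDerivAt_inv hb.ne').const_mul π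
  have hexp : HasDerivAt (fun b => rexp (-(a / (4 * b))))
      (a / (4 * b ^ 2) * rexp (-(a / (4 * b)))) b := by
    have hlin : ∀ b : ℝ, -(a / (4 * b)) = -(a / 4) * b⁻¹ := fun b => by ring
    simp only [hlin]
    exact ((hasDerivAt_inv hb.ne').const_mul _).exp.congr_deriv (by ring)
  refine ((hquot.rpow_const (p := n / 2) (Or.inl (by positivity))).mul hexp).congr_deriv ?_
  rw [Real.rpow_sub (by positivity), Real.rpow_one]
  field_simp
  ring

theorem integral_sq_norm_mul_modulatedGaussian (k : V) {b : ℝ} (hb : 0 < b) :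
    ∫ v, (‖v‖ : ℂ) ^ 2 * modulatedGaussian k b v =
      (((π / b) ^ (finrank ℝ V / 2 : ℝ) * (finrank ℝ V / (2 * b) - ‖k‖ ^ 2 / (4 * b ^ 2)) *
        rexp (-(‖k‖ ^ 2 / (4 * b))) : ℝ) : ℂ) := by
  have hprofile := (hasDerivAt_pi_div_rpow_mul_exp_neg_div (finrank ℝ V) (‖k‖ ^ 2) hb).ofReal_comp
  have hintegral := (hasDerivAt_integral_modulatedGaussian k hb).congr_of_eventuallyEq
    (Filter.eventually_of_mem (Ioi_mem_nhds hb) fun b hb => (integral_modulatedGaussian k hb).symm)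
  rw [← neg_inj, hintegral.unique hprofile, ofReal_neg]

theorem integral_neg_laplacian_gaussian_mul_cexp_neg_inner {s : ℝ} (hs : 0 < s) (k : V) :
    (∫ x : V, ((2 * finrank ℝ V / s ^ 2 - 4 * ‖x‖ ^ 2 / s ^ 4 : ℝ) : ℂ) *
        cexp (-(‖x‖ ^ 2 / s ^ 2 : ℝ)) * cexp (-(I * ((⟪k, x⟫ : ℝ) : ℂ)))) =
      ((π ^ (finrank ℝ V / 2 : ℝ) * s ^ finrank ℝ V * ‖k‖ ^ 2 *
        rexp (-(s ^ 2 * ‖k‖ ^ 2 / 4)) : ℝ) : ℂ) := by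
  set b := (s ^ 2)⁻¹ with hb_def
  have hb : 0 < b := by positivity
  have hintegrand : ∀ x : V, ((2 * finrank ℝ V / s ^ 2 - 4 * ‖x‖ ^ 2 / s ^ 4 : ℝ) : ℂ) *
      cexp (-(‖x‖ ^ 2 / s ^ 2 : ℝ)) * cexp (-(I * ((⟪k, x⟫ : ℝ) : ℂ))) =
      ((2 * finrank ℝ V * b : ℝ) : ℂ) * modulatedGaussian k b x -
        ((4 * b ^ 2 : ℝ) : ℂ) * ((‖x‖ : ℂ) ^ 2 * modulatedGaussian k b x) := by
    intro x
    rw [mul_assoc, ← Complex.exp_add, modulatedGaussian, hb_def]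
    push_cast
    ring_nf
  have hpow : (π / b) ^ (finrank ℝ V / 2 : ℝ) = π ^ (finrank ℝ V / 2 : ℝ) * s ^ finrank ℝ V := by
    rw [hb_def, div_inv_eq_mul, Real.mul_rpow Real.pi_pos.le (sq_nonneg s),
      ← Real.rpow_natCast s 2, ← Real.rpow_mul hs.le, ← Real.rpow_natCast s (finrank ℝ V)]
    congr 2
    push_cast
    ring
  simp_rw [hintegrand]
  rw [integral_sub ((integrable_modulatedGaussian k hb).const_mul _)
      ((integrable_sq_norm_mul_modulatedGaussian k hb).const_mul _),
    integral_const_mul, integral_const_mul, integral_modulatedGaussian k hb,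
    integral_sq_norm_mul_modulatedGaussian k hb, hpow]
  norm_cast
  rw [hb_def]
  field_simp
  push_cast
  ring

end

/-- 3D Fourier transform of one term of the sum-of-Gaussians screening function:
`∫_{ℝ³} (6/s² - 4|x|²/s⁴) e^{-|x|²/s²} e^{-i⟨k,x⟩} dx = π^{3/2} s³ |k|² e^{-s²|k|²/4}`. -/
theorem fourier_transform_sog_screen (s : ℝ) (hs : 0 < s) (k : EuclideanSpace ℝ (Fin 3)) :
    (∫ x : EuclideanSpace ℝ (Fin 3),
        ((6 / s ^ 2 - 4 * ‖x‖ ^ 2 / s ^ 4 : ℝ) : ℂ) *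
          Complex.exp (-(‖x‖ ^ 2 / s ^ 2 : ℝ)) *
          Complex.exp (-(Complex.I * ((inner ℝ k x : ℝ) : ℂ)))) =
      ((Real.pi ^ ((3 : ℝ) / 2) * s ^ 3 * ‖k‖ ^ 2 *
          Real.exp (-(s ^ 2 * ‖k‖ ^ 2 / 4)) : ℝ) : ℂ) := by
  have h := integral_neg_laplacian_gaussian_mul_cexp_neg_inner hs k
  rwa [finrank_euclideanSpace_fin, Nat.cast_ofNat, show (2 : ℝ) * 3 = 6 by norm_num] at h
end

section
/- Let L_x, L_y > 0 and let 𝒦² = {(2π n₁/L_x, 2π n₂/L_y) : n₁, n₂ ∈ ℤ} be the reciprocal lattice. For every s > 0 and K > 0, Σ_{k ∈ 𝒦², |k| ≥ K} exp(-s² |k|²/4) ≤ (1 + √2 L_x/(s√π)) (1 + √2 L_y/(s√π)) · exp(-s² K²/8). -/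
/-!
On the subset `|k| ≥ K` one has `e^{-s²|k|²/4} ≤ e^{-s²K²/8} e^{-s²|k|²/8}`, so the tail is at most
`e^{-s²K²/8}` times the full lattice sum of `e^{-s²|k|²/8}`. That sum factorizes into two
one-dimensional Gaussian sums `∑_{n ∈ ℤ} e^{-b n²}` with `b = s²π²/(2L²)`, and the integral test
bounds each of them by `1 + ∫_ℝ e^{-b x²} dx = 1 + √(π/b) = 1 + √2 L/(s√π)`.
-/

open Real MeasureTheory Set

theorem summable_subtype_and_tsum_le_of_le {α : Type*} {f g : α → ℝ} {s : Set α}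
    (hf : Summable f) (hf0 : ∀ x, 0 ≤ f x) (hg0 : ∀ x ∈ s, 0 ≤ g x)
    (hgf : ∀ x ∈ s, g x ≤ f x) :
    Summable (fun x : s => g x) ∧ ∑' x : s, g x ≤ ∑' x, f x := by
  have hsub : Summable (fun x : s => g x) :=
    (hf.subtype s).of_nonneg_of_le (fun x => hg0 x.1 x.2) fun x => hgf x.1 x.2
  refine ⟨hsub, ?_⟩
  calc ∑' x : s, g x ≤ ∑' x : s, f x := hsub.tsum_le_tsum (fun x => hgf x.1 x.2) (hf.subtype s)
    _ ≤ ∑' x, f x := Summable.tsum_subtype_le f s hf0 hf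

section IntegralTest

variable {f : ℝ → ℝ}

theorem summable_int_of_even_of_antitoneOn (even : ∀ x, f (-x) = f x)
    (anti : AntitoneOn f (Ici 0)) (integrable : IntegrableOn f (Ioi 0))
    (nonneg : ∀ x, 0 ≤ f x) :
    Summable (fun n : ℤ => f n) := by
  have hnat := anti.summable_of_integrableOn_Ioi_zero integrable fun x _ => nonneg x
  exact Summable.of_nat_of_neg (by simpa using hnat) (by simpa [even] using hnat)

theorem tsum_int_le_of_even_of_antitoneOn (even : ∀ x, f (-x) = f x)
    (anti : AntitoneOn f (Ici 0)) (integrable : IntegrableOn f (Ioi 0))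
    (nonneg : ∀ x, 0 ≤ f x) :
    ∑' n : ℤ, f n ≤ f 0 + 2 * ∫ x in Ioi 0, f x := by
  have htail := anti.tsum_add_one_le_integral integrable fun x _ => nonneg x
  rw [tsum_int_eq_zero_add_two_mul_tsum_pnat (fun n => by simpa using even n)
    (summable_int_of_even_of_antitoneOn even anti integrable nonneg)]
  have hpnat : ∑' n : ℕ+, f ((n : ℕ) : ℤ) = ∑' n : ℕ, f (n + 1 : ℕ) :=
    tsum_pnat_eq_tsum_succ (f := fun n : ℕ => f n)
  simp only [Int.cast_zero, Int.cast_natCast, nsmul_eq_mul, Nat.cast_ofNat] at hpnat ⊢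
  linarith

end IntegralTest

section Gaussian

variable {b : ℝ}

theorem antitoneOn_exp_neg_mul_sq (hb : 0 ≤ b) :
    AntitoneOn (fun x : ℝ => exp (-b * x ^ 2)) (Ici 0) := fun x hx y _ hxy => by
  have := pow_le_pow_left₀ (mem_Ici.1 hx) hxy 2
  simp only [exp_le_exp]
  nlinarith

theorem summable_int_exp_neg_mul_sq (hb : 0 < b) :
    Summable (fun n : ℤ => exp (-b * (n : ℝ) ^ 2)) :=
  summable_int_of_even_of_antitoneOn (by simp) (antitoneOn_exp_neg_mul_sq hb.le)
    (integrable_exp_neg_mul_sq hb).integrableOn fun _ => (exp_pos _).le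

theorem tsum_int_exp_neg_mul_sq_le (hb : 0 < b) :
    ∑' n : ℤ, exp (-b * (n : ℝ) ^ 2) ≤ 1 + √(π / b) := by
  have := tsum_int_le_of_even_of_antitoneOn (f := fun x : ℝ => exp (-b * x ^ 2)) (by simp)
    (antitoneOn_exp_neg_mul_sq hb.le) (integrable_exp_neg_mul_sq hb).integrableOn
    fun _ => (exp_pos _).le
  rw [integral_gaussian_Ioi, mul_div_cancel₀ _ two_ne_zero] at this
  simpa using this

end Gaussian

theorem summable_and_tsum_int_prod_exp_neg_mul_sq_le {b₁ b₂ : ℝ} (hb₁ : 0 < b₁) (hb₂ : 0 < b₂) :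
    Summable (fun n : ℤ × ℤ => exp (-b₁ * (n.1 : ℝ) ^ 2) * exp (-b₂ * (n.2 : ℝ) ^ 2)) ∧
      ∑' n : ℤ × ℤ, exp (-b₁ * (n.1 : ℝ) ^ 2) * exp (-b₂ * (n.2 : ℝ) ^ 2) ≤
        (1 + √(π / b₁)) * (1 + √(π / b₂)) := by
  have h₁ := summable_int_exp_neg_mul_sq hb₁
  have h₂ := summable_int_exp_neg_mul_sq hb₂
  have hprod := h₁.mul_of_nonneg h₂ (fun _ => (exp_pos _).le) fun _ => (exp_pos _).le
  refine ⟨hprod, ?_⟩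
  rw [← h₁.tsum_mul_tsum h₂ hprod]
  exact mul_le_mul (tsum_int_exp_neg_mul_sq_le hb₁) (tsum_int_exp_neg_mul_sq_le hb₂)
    (tsum_nonneg fun _ => (exp_pos _).le) (by positivity)

section ReciprocalLattice

variable {L s : ℝ}

theorem sq_mul_sq_two_pi_mul_div (hL : L ≠ 0) (x : ℝ) :
    s ^ 2 * (2 * π * x / L) ^ 2 / 8 = s ^ 2 * π ^ 2 / (2 * L ^ 2) * x ^ 2 := by
  field_simp
  ring

theorem sqrt_pi_div_gaussian_rate (hL : 0 < L) (hs : 0 < s) :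
    √(π / (s ^ 2 * π ^ 2 / (2 * L ^ 2))) = √2 * L / (s * √π) := by
  have hsq : π / (s ^ 2 * π ^ 2 / (2 * L ^ 2)) = (√2 * L / (s * √π)) ^ 2 := by
    rw [div_pow, mul_pow, mul_pow, sq_sqrt zero_le_two, sq_sqrt pi_pos.le]
    field_simp
  rw [hsq, sqrt_sq (by positivity)]

end ReciprocalLattice

theorem exp_neg_quarter_le_of_sq_le {a q K : ℝ} (ha : 0 ≤ a) (hKq : K ^ 2 ≤ q) :
    exp (-(a * q / 4)) ≤ exp (-(a * K ^ 2 / 8)) * exp (-(a * q / 8)) := by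
  rw [← exp_add, exp_le_exp]
  nlinarith [mul_le_mul_of_nonneg_left hKq ha]

/-- Tail bound for lattice Gaussian sums on the reciprocal lattice
`𝒦² = {(2πn₁/L_x, 2πn₂/L_y) : n₁, n₂ ∈ ℤ}`: for `s, K > 0`, the family
`k ↦ e^{-s²|k|²/4}` restricted to lattice points with `|k| ≥ K` is summable and
`Σ_{|k| ≥ K} e^{-s²|k|²/4} ≤ (1 + √2 L_x/(s√π))(1 + √2 L_y/(s√π)) e^{-s²K²/8}`. -/
theorem lattice_gaussian_tail_bound (Lx Ly s K : ℝ) (hLx : 0 < Lx) (hLy : 0 < Ly)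
    (hs : 0 < s) (hK : 0 < K) :
    (Summable fun n : {n : ℤ × ℤ //
        K ≤ Real.sqrt ((2 * Real.pi * n.1 / Lx) ^ 2 + (2 * Real.pi * n.2 / Ly) ^ 2)} =>
      Real.exp (-(s ^ 2 *
        ((2 * Real.pi * n.1.1 / Lx) ^ 2 + (2 * Real.pi * n.1.2 / Ly) ^ 2) / 4))) ∧
    (∑' n : {n : ℤ × ℤ //
        K ≤ Real.sqrt ((2 * Real.pi * n.1 / Lx) ^ 2 + (2 * Real.pi * n.2 / Ly) ^ 2)},
        Real.exp (-(s ^ 2 *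
          ((2 * Real.pi * n.1.1 / Lx) ^ 2 + (2 * Real.pi * n.1.2 / Ly) ^ 2) / 4))) ≤
      (1 + Real.sqrt 2 * Lx / (s * Real.sqrt Real.pi)) *
        (1 + Real.sqrt 2 * Ly / (s * Real.sqrt Real.pi)) *
        Real.exp (-(s ^ 2 * K ^ 2 / 8)) := by
  set q : ℤ × ℤ → ℝ := fun n => (2 * π * n.1 / Lx) ^ 2 + (2 * π * n.2 / Ly) ^ 2
  set c := exp (-(s ^ 2 * K ^ 2 / 8))
  have hfactor : ∀ n : ℤ × ℤ, exp (-(s ^ 2 * q n / 8)) =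
      exp (-(s ^ 2 * π ^ 2 / (2 * Lx ^ 2)) * (n.1 : ℝ) ^ 2) *
        exp (-(s ^ 2 * π ^ 2 / (2 * Ly ^ 2)) * (n.2 : ℝ) ^ 2) := fun n => by
    rw [← exp_add, mul_add, add_div, sq_mul_sq_two_pi_mul_div hLx.ne',
      sq_mul_sq_two_pi_mul_div hLy.ne']
    congr 1
    ring
  obtain ⟨hsum, hle⟩ := summable_and_tsum_int_prod_exp_neg_mul_sq_le
    (b₁ := s ^ 2 * π ^ 2 / (2 * Lx ^ 2)) (b₂ := s ^ 2 * π ^ 2 / (2 * Ly ^ 2))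
    (by positivity) (by positivity)
  rw [sqrt_pi_div_gaussian_rate hLx hs, sqrt_pi_div_gaussian_rate hLy hs] at hle
  obtain ⟨htail, htail_le⟩ := summable_subtype_and_tsum_le_of_le (s := {n | K ≤ √(q n)})
    (g := fun n => exp (-(s ^ 2 * q n / 4))) (hsum.mul_left c)
    (fun n => by positivity) (fun n _ => (exp_pos _).le) fun n hn => by
      rw [← hfactor n]
      exact exp_neg_quarter_le_of_sq_le (sq_nonneg s) ((le_sqrt hK.le (by positivity)).1 hn)
  refine ⟨htail, htail_le.trans ?_⟩
  rw [tsum_mul_left, mul_comm c]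
  exact mul_le_mul_of_nonneg_right hle (exp_pos _).le
end

section
/- Let q_1, …, q_N ∈ ℝ and r_1, …, r_N ∈ ℝ³, fix i ∈ {1, …, N}, write r_{ij} = |r_i - r_j|, and define G(k) = Σ_{j=1}^{N} q_j · sinc(k r_{ij}) for k > 0, where sinc(t) = sin(t)/t for t ≠ 0 and sinc(0) = 1. Let w_ℓ > 0 and s_ℓ > 0 for ℓ = 0, …, M, let K > 0, and suppose B ≥ 0 satisfies |G(k)| ≤ B for all k ≥ K. Then |(1/(4√π)) Σ_{ℓ=0}^{M} w_ℓ s_ℓ³ ∫_K^∞ k² exp(-s_ℓ² k²/4) G(k) dk| ≤ (B/(2√π)) Σ_{ℓ=0}^{M} w_ℓ (√π + s_ℓ K) exp(-s_ℓ² K²/4). -/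
/-!
Bounding `|G|` by `B` reduces each term to the Gaussian moment tail `∫_K^∞ k² e^{-ak²}` with
`a = s²/4`. Integration by parts writes it as `K e^{-aK²}/(2a)` plus `(2a)⁻¹ ∫_K^∞ e^{-ak²}`, and
for `K ≥ 0` the pointwise bound `e^{-ak²} ≤ e^{-aK²} e^{-a(k-K)²}` makes the last tail at most
`e^{-aK²}` times the half-line Gaussian integral `√π / (2√a)`. Since `√a = s/2`, multiplying by
`s³` gives exactly `2 (√π + sK) e^{-s²K²/4}`.
-/

noncomputable def sinc (t : ℝ) : ℝ := if t = 0 then 1 else Real.sin t / t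

open MeasureTheory Set Filter

theorem setIntegral_Ioi_comp_sub_right {E : Type*} [NormedAddCommGroup E] [NormedSpace ℝ E]
    (f : ℝ → E) (c : ℝ) : ∫ x in Ioi c, f (x - c) = ∫ x in Ioi 0, f x := by
  have := (measurePreserving_add_right volume c).setIntegral_preimage_emb
    (measurableEmbedding_addRight c) (fun x => f (x - c)) (Ioi c)
  simpa only [preimage_add_const_Ioi, sub_self, add_sub_cancel_right] using this.symm

theorem abs_setIntegral_mul_le_of_abs_le {α : Type*} [MeasurableSpace α] {μ : Measure α}
    {s : Set α} {f g : α → ℝ} {B : ℝ} (hs : MeasurableSet s) (hf : IntegrableOn f s μ)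
    (hf₀ : ∀ x ∈ s, 0 ≤ f x) (hg : ∀ x ∈ s, |g x| ≤ B) :
    |∫ x in s, f x * g x ∂μ| ≤ B * ∫ x in s, f x ∂μ := by
  rw [← integral_const_mul (μ := μ.restrict s) B f]
  refine norm_integral_le_of_norm_le (f := fun x => f x * g x) (hf.const_mul B) ?_
  filter_upwards [ae_restrict_mem hs] with x hx
  rw [Real.norm_eq_abs, abs_mul, abs_of_nonneg (hf₀ x hx), mul_comm B]
  exact mul_le_mul_of_nonneg_left (hg x hx) (hf₀ x hx)

section Gaussian

open Real

variable {a : ℝ}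

theorem integrable_sq_mul_exp_neg_mul_sq (ha : 0 < a) :
    Integrable fun k : ℝ => k ^ 2 * exp (-a * k ^ 2) := by
  simpa only [rpow_two] using integrable_rpow_mul_exp_neg_mul_sq ha (s := 2) (by norm_num)

theorem integral_Ioi_exp_neg_mul_sq_le (ha : 0 < a) {K : ℝ} (hK : 0 ≤ K) :
    ∫ k in Ioi K, exp (-a * k ^ 2) ≤ √π / (2 * √a) * exp (-a * K ^ 2) := by
  have hshift : Integrable fun k : ℝ => exp (-a * K ^ 2) * exp (-a * (k - K) ^ 2) :=
    ((integrable_exp_neg_mul_sq ha).comp_sub_right K).const_mul _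
  -- `-a k² = -a K² - a (k - K)² - 2 a K (k - K)` and the last term is `≤ 0` for `k ≥ K ≥ 0`.
  have hle : ∀ k ∈ Ioi K, exp (-a * k ^ 2) ≤ exp (-a * K ^ 2) * exp (-a * (k - K) ^ 2) := by
    intro k hk
    rw [← exp_add, exp_le_exp]
    nlinarith [mul_nonneg (mul_nonneg ha.le hK) (sub_nonneg.2 hk.le)]
  calc ∫ k in Ioi K, exp (-a * k ^ 2)
      ≤ ∫ k in Ioi K, exp (-a * K ^ 2) * exp (-a * (k - K) ^ 2) :=
        setIntegral_mono_on (integrable_exp_neg_mul_sq ha).integrableOn hshift.integrableOn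
          measurableSet_Ioi hle
    _ = exp (-a * K ^ 2) * ∫ t in Ioi 0, exp (-a * t ^ 2) := by
        rw [integral_const_mul, setIntegral_Ioi_comp_sub_right (fun t => exp (-a * t ^ 2))]
    _ = √π / (2 * √a) * exp (-a * K ^ 2) := by
        rw [integral_gaussian_Ioi, sqrt_div pi_pos.le]
        ring

theorem integral_Ioi_sq_mul_exp_neg_mul_sq (ha : 0 < a) (K : ℝ) :
    ∫ k in Ioi K, k ^ 2 * exp (-a * k ^ 2) =
      K / (2 * a) * exp (-a * K ^ 2) + (2 * a)⁻¹ * ∫ k in Ioi K, exp (-a * k ^ 2) := by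
  set F : ℝ → ℝ := fun k => -(k / (2 * a)) * exp (-a * k ^ 2)
  have hF : ∀ k ∈ Ici K, HasDerivAt F
      (k ^ 2 * exp (-a * k ^ 2) - (2 * a)⁻¹ * exp (-a * k ^ 2)) k := by
    intro k _
    refine (((hasDerivAt_id' k).div_const (2 * a)).fun_neg.fun_mul
      ((hasDerivAt_pow 2 k).const_mul (-a)).exp).congr_deriv ?_
    field_simp
    ring
  have hF_tendsto : Tendsto F atTop (nhds 0) := by
    have h := (rpow_mul_exp_neg_mul_sq_isLittleO_exp_neg ha 1).trans_tendsto
      (tendsto_exp_atBot.comp (tendsto_id.const_mul_atTop_of_neg (by norm_num)))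
    simpa only [rpow_one, F, neg_mul, div_eq_mul_inv, mul_right_comm, neg_zero, zero_mul] using
      (h.mul_const (2 * a)⁻¹).neg
  have hexp := (integrable_exp_neg_mul_sq ha).integrableOn (s := Ioi K)
  have h := integral_Ioi_of_hasDerivAt_of_tendsto' hF
    ((integrable_sq_mul_exp_neg_mul_sq ha).integrableOn.sub (hexp.const_mul _)) hF_tendsto
  rw [integral_sub (integrable_sq_mul_exp_neg_mul_sq ha).integrableOn (hexp.const_mul _),
    integral_const_mul] at h
  simp only [F] at h
  linarith

theorem integral_Ioi_sq_mul_exp_neg_mul_sq_le (ha : 0 < a) {K : ℝ} (hK : 0 ≤ K) :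
    ∫ k in Ioi K, k ^ 2 * exp (-a * k ^ 2) ≤
      (K / (2 * a) + √π / (4 * a * √a)) * exp (-a * K ^ 2) := by
  have h := mul_le_mul_of_nonneg_left (integral_Ioi_exp_neg_mul_sq_le ha hK)
    (inv_nonneg.2 (mul_nonneg zero_le_two ha.le))
  rw [integral_Ioi_sq_mul_exp_neg_mul_sq ha K]
  linarith [show (2 * a)⁻¹ * (√π / (2 * √a) * exp (-a * K ^ 2)) =
    √π / (4 * a * √a) * exp (-a * K ^ 2) by field_simp; ring]

theorem abs_cube_mul_setIntegral_Ioi_sq_mul_gaussian_mul_le {s K B : ℝ} {G : ℝ → ℝ} (hs : 0 < s)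
    (hK : 0 ≤ K) (hB : 0 ≤ B) (hG : ∀ k, K ≤ k → |G k| ≤ B) :
    |s ^ 3 * ∫ k in Ioi K, k ^ 2 * exp (-(s ^ 2 * k ^ 2 / 4)) * G k| ≤
      2 * B * (√π + s * K) * exp (-(s ^ 2 * K ^ 2 / 4)) := by
  have ha : 0 < s ^ 2 / 4 := by positivity
  have hsqrt : √(s ^ 2 / 4) = s / 2 := by
    rw [show s ^ 2 / 4 = (s / 2) ^ 2 by ring, sqrt_sq (by positivity)]
  have hexp : ∀ k, exp (-(s ^ 2 * k ^ 2 / 4)) = exp (-(s ^ 2 / 4) * k ^ 2) := fun k => by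
    ring_nf
  have hI : |∫ k in Ioi K, k ^ 2 * exp (-(s ^ 2 * k ^ 2 / 4)) * G k| ≤
      B * ∫ k in Ioi K, k ^ 2 * exp (-(s ^ 2 / 4) * k ^ 2) := by
    simp only [hexp]
    exact abs_setIntegral_mul_le_of_abs_le measurableSet_Ioi
      (integrable_sq_mul_exp_neg_mul_sq ha).integrableOn (fun k _ => by positivity)
      (fun k hk => hG k hk.le)
  calc |s ^ 3 * ∫ k in Ioi K, k ^ 2 * exp (-(s ^ 2 * k ^ 2 / 4)) * G k|
      ≤ s ^ 3 * (B * ((K / (2 * (s ^ 2 / 4)) + √π / (4 * (s ^ 2 / 4) * √(s ^ 2 / 4))) *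
          exp (-(s ^ 2 / 4) * K ^ 2))) := by
        rw [abs_mul, abs_of_pos (by positivity)]
        gcongr
        exact hI.trans (mul_le_mul_of_nonneg_left
          (integral_Ioi_sq_mul_exp_neg_mul_sq_le ha hK) hB)
    _ = 2 * B * (√π + s * K) * exp (-(s ^ 2 * K ^ 2 / 4)) := by
        rw [hsqrt, hexp]
        field_simp
        ring

end Gaussian

/-- Explicit-constant, conditional form of the spectrum-truncation error estimate for
the mid-range Fourier spectral solver: if `G(k) = Σ_j q_j sinc(k·|r_i - r_j|)` satisfies
`|G(k)| ≤ B` for `k ≥ K`, then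
`|(1/(4√π)) Σ_ℓ w_ℓ s_ℓ³ ∫_K^∞ k² e^{-s_ℓ²k²/4} G(k) dk|
  ≤ (B/(2√π)) Σ_ℓ w_ℓ (√π + s_ℓ K) e^{-s_ℓ²K²/4}`. -/
theorem mid_range_spectrum_truncation_bound (N : ℕ) (q : Fin N → ℝ)
    (r : Fin N → EuclideanSpace ℝ (Fin 3)) (i : Fin N)
    (M : ℕ) (w s : ℕ → ℝ)
    (hw : ∀ ℓ ∈ Finset.range (M + 1), 0 < w ℓ)
    (hs : ∀ ℓ ∈ Finset.range (M + 1), 0 < s ℓ)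
    (K : ℝ) (hK : 0 < K) (B : ℝ) (hB : 0 ≤ B)
    (hG : ∀ k : ℝ, K ≤ k → |∑ j, q j * sinc (k * ‖r i - r j‖)| ≤ B) :
    |(1 / (4 * Real.sqrt Real.pi)) * ∑ ℓ ∈ Finset.range (M + 1), w ℓ * (s ℓ) ^ 3 *
        ∫ k in Set.Ioi K, k ^ 2 * Real.exp (-((s ℓ) ^ 2 * k ^ 2 / 4)) *
          (∑ j, q j * sinc (k * ‖r i - r j‖))| ≤
      (B / (2 * Real.sqrt Real.pi)) * ∑ ℓ ∈ Finset.range (M + 1),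
        w ℓ * (Real.sqrt Real.pi + s ℓ * K) * Real.exp (-((s ℓ) ^ 2 * K ^ 2 / 4)) := by
  have hterm : ∀ ℓ ∈ Finset.range (M + 1),
      |w ℓ * (s ℓ) ^ 3 * ∫ k in Set.Ioi K, k ^ 2 * Real.exp (-((s ℓ) ^ 2 * k ^ 2 / 4)) *
          (∑ j, q j * sinc (k * ‖r i - r j‖))| ≤
        w ℓ * (2 * B * (Real.sqrt Real.pi + s ℓ * K) * Real.exp (-((s ℓ) ^ 2 * K ^ 2 / 4))) := by
    intro ℓ hℓ
    rw [mul_assoc, abs_mul, abs_of_pos (hw ℓ hℓ)]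
    exact mul_le_mul_of_nonneg_left
      (abs_cube_mul_setIntegral_Ioi_sq_mul_gaussian_mul_le (hs ℓ hℓ) hK.le hB hG) (hw ℓ hℓ).le
  rw [abs_mul, abs_of_nonneg (by positivity)]
  calc _ ≤ 1 / (4 * Real.sqrt Real.pi) * ∑ ℓ ∈ Finset.range (M + 1),
          w ℓ * (2 * B * (Real.sqrt Real.pi + s ℓ * K) * Real.exp (-((s ℓ) ^ 2 * K ^ 2 / 4))) := by
        gcongr
        exact (Finset.abs_sum_le_sum_abs _ _).trans (Finset.sum_le_sum hterm)
    _ = _ := by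
        rw [Finset.mul_sum, Finset.mul_sum]
        exact Finset.sum_congr rfl fun ℓ _ => by ring
end
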